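/- Let S be a semigroup satisfying conditions (A), (B), (C), and let Q be the semigroup of ~-classes of Σ. For every a ∈ S there exists x ∈ S with l(x) = r(a); if x, y ∈ S satisfy l(x) = r(a) = l(y), then [x, xa] = [y, ya]; and the resulting map θ: S → Q, aθ = [x, xa] (for any x ∈ S with l(x) = r(a)), is an injective semigroup homomorphism, i.e., S is embedded in Q. -/

import Mathlib

/-- The bicyclic semigroup `𝓑` carried by `ℕ × ℕ`, an element being `(r, l)`;
`(m,n)(p,q) = (m - n + t, q - p + t)` with `t = max n p`. -/
structure Bicyclic where
  r : ℕ
  l : ℕ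

instance : Mul Bicyclic :=
  ⟨fun x y => ⟨x.r + (max x.l y.r - x.l), y.l + (max x.l y.r - y.r)⟩⟩

/-- The inverse `(m,n)⁻¹ = (n,m)` in the bicyclic semigroup. -/
def Bicyclic.inv (x : Bicyclic) : Bicyclic := ⟨x.l, x.r⟩

/-- `T` is a left I-order in the bicyclic semigroup `𝓑`. -/
def IsLeftIOrderBic (T : Set Bicyclic) : Prop :=
  ∀ q : Bicyclic, ∃ a ∈ T, ∃ b ∈ T, q = a.inv * b

/-- `r a`, the first coordinate of `φ a` in `𝓑`. -/
def rr {S : Type*} [Mul S] (φ : S →ₙ* Bicyclic) (a : S) : ℕ := (φ a).r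

/-- `l a`, the second coordinate of `φ a` in `𝓑`. -/
def ll {S : Type*} [Mul S] (φ : S →ₙ* Bicyclic) (a : S) : ℕ := (φ a).l

/-- Condition (A): the image of `φ` is a left I-order in `𝓑`. -/
def CondA {S : Type*} [Mul S] (φ : S →ₙ* Bicyclic) : Prop :=
  IsLeftIOrderBic (Set.range (⇑φ))

/-- Condition (B)(i): if `l x, l y ≥ r a` and `x * a = y * a` then `x = y`. -/
def CondBi {S : Type*} [Mul S] (φ : S →ₙ* Bicyclic) : Prop :=
  ∀ x y a : S, rr φ a ≤ ll φ x → rr φ a ≤ ll φ y → x * a = y * a → x = y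

/-- Condition (B)(ii): if `r x, r y ≥ l a` and `a * x = a * y` then `x = y`. -/
def CondBii {S : Type*} [Mul S] (φ : S →ₙ* Bicyclic) : Prop :=
  ∀ x y a : S, ll φ a ≤ rr φ x → ll φ a ≤ rr φ y → a * x = a * y → x = y

/-- Condition (C): for all `b c` there are `x y` with `x * b = y * c`,
`r x = r y`, `l x = r b - l b + max (l b) (l c)` and
`l y = r c - l c + max (l b) (l c)`. -/
def CondC {S : Type*} [Mul S] (φ : S →ₙ* Bicyclic) : Prop :=
  ∀ b c : S, ∃ x y : S, x * b = y * c ∧ rr φ x = rr φ y ∧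
    ll φ x = rr φ b + (max (ll φ b) (ll φ c) - ll φ b) ∧
    ll φ y = rr φ c + (max (ll φ b) (ll φ c) - ll φ c)

/-- `Σ = {(a,b) ∈ S × S : r a = r b}`. -/
abbrev Sig {S : Type*} [Mul S] (φ : S →ₙ* Bicyclic) : Type _ :=
  {p : S × S // rr φ p.1 = rr φ p.2}

/-- The relation `∼` on pairs: `(a,b) ∼ (c,d)` iff there are `x y` with
`x * a = y * c`, `x * b = y * d`, `l x = r a`, `l y = r c`, `r x = r y`. -/
def simP {S : Type*} [Mul S] (φ : S →ₙ* Bicyclic) (p q : S × S) : Prop :=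
  ∃ x y : S, x * p.1 = y * q.1 ∧ x * p.2 = y * q.2 ∧
    ll φ x = rr φ p.1 ∧ ll φ y = rr φ q.1 ∧ rr φ x = rr φ y

/-- The relation `∼` on `Σ`. -/
def sim {S : Type*} [Mul S] (φ : S →ₙ* Bicyclic) (p q : Sig φ) : Prop :=
  simP φ p.1 q.1

theorem rr_mul {S : Type*} [Mul S] (φ : S →ₙ* Bicyclic) (x a : S) :
    rr φ (x * a) = rr φ x + (max (ll φ x) (rr φ a) - ll φ x) := by
  simp only [rr, ll, map_mul]; rfl

theorem rr_mul_eq {S : Type*} [Mul S] (φ : S →ₙ* Bicyclic) {x a : S}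
    (h : rr φ a ≤ ll φ x) : rr φ (x * a) = rr φ x := by
  have h1 := rr_mul φ x a
  have h2 : max (ll φ x) (rr φ a) = ll φ x := max_eq_left h
  omega

theorem sig_mul_ok {S : Type*} [Mul S] (φ : S →ₙ* Bicyclic) {a b c d x y : S}
    (hab : rr φ a = rr φ b) (hcd : rr φ c = rr φ d)
    (hx : ll φ x = rr φ b + (max (ll φ b) (ll φ c) - ll φ b))
    (hy : ll φ y = rr φ c + (max (ll φ b) (ll φ c) - ll φ c))
    (hr : rr φ x = rr φ y) : rr φ (x * a) = rr φ (y * d) := by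
  have h1 := rr_mul_eq φ (x := x) (a := a)
    (by have := le_max_left (ll φ b) (ll φ c); omega)
  have h2 := rr_mul_eq φ (x := y) (a := d)
    (by have := le_max_right (ll φ b) (ll φ c); omega)
  omega

/-- The set `Q` of `∼`-classes of `Σ`. -/
def QT {S : Type*} [Mul S] (φ : S →ₙ* Bicyclic) : Type _ := Quot (sim φ)

/-- The `∼`-class `[a,b]` of an element of `Σ`. -/
def cls {S : Type*} [Mul S] (φ : S →ₙ* Bicyclic) (p : Sig φ) : QT φ :=
  Quot.mk _ p

/-- Packaging `(a, b)` with `r a = r b` as an element of `Σ`. -/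
def mkSig {S : Type*} [Mul S] (φ : S →ₙ* Bicyclic) (a b : S)
    (h : rr φ a = rr φ b) : Sig φ := ⟨(a, b), h⟩

/-- A chosen witness `x` from condition (C) applied to `b, c`. -/
noncomputable def cx {S : Type*} [Mul S] {φ : S →ₙ* Bicyclic} (hC : CondC φ)
    (b c : S) : S := (hC b c).choose

/-- A chosen witness `y` from condition (C) applied to `b, c`. -/
noncomputable def cy {S : Type*} [Mul S] {φ : S →ₙ* Bicyclic} (hC : CondC φ)
    (b c : S) : S := (hC b c).choose_spec.choose

theorem c_spec {S : Type*} [Mul S] {φ : S →ₙ* Bicyclic} (hC : CondC φ) (b c : S) :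
    cx hC b c * b = cy hC b c * c ∧ rr φ (cx hC b c) = rr φ (cy hC b c) ∧
    ll φ (cx hC b c) = rr φ b + (max (ll φ b) (ll φ c) - ll φ b) ∧
    ll φ (cy hC b c) = rr φ c + (max (ll φ b) (ll φ c) - ll φ c) :=
  (hC b c).choose_spec.choose_spec

/-- Representative-level multiplication: `(a,b) · (c,d) = (x * a, y * d)` where
`x, y` are the witnesses from condition (C) for `b, c`. -/
noncomputable def pairMul {S : Type*} [Mul S] {φ : S →ₙ* Bicyclic} (hC : CondC φ)
    (p q : Sig φ) : Sig φ :=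
  ⟨(cx hC p.1.2 q.1.1 * p.1.1, cy hC p.1.2 q.1.1 * q.1.2),
    sig_mul_ok φ p.2 q.2 (c_spec hC p.1.2 q.1.1).2.2.1
      (c_spec hC p.1.2 q.1.1).2.2.2 (c_spec hC p.1.2 q.1.1).2.1⟩

/-- The multiplication `[a,b][c,d] = [x*a, y*d]` on the set `Q` of `∼`-classes. -/
noncomputable def qmul {S : Type*} [Mul S] {φ : S →ₙ* Bicyclic} (hC : CondC φ)
    (u v : QT φ) : QT φ :=
  cls φ (pairMul hC (Quot.out u) (Quot.out v))

theorem ll_cx_self {S : Type*} [Mul S] {φ : S →ₙ* Bicyclic} (hC : CondC φ)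
    (a : S) : ll φ (cx hC a a) = rr φ a := by
  have h := (c_spec hC a a).2.2.1
  have h2 : max (ll φ a) (ll φ a) = ll φ a := max_self _
  omega

/-- The embedding `θ : S → Q`, `a θ = [x, x*a]` for a chosen `x` with `l x = r a`. -/
noncomputable def theta {S : Type*} [Mul S] {φ : S →ₙ* Bicyclic} (hC : CondC φ)
    (a : S) : QT φ :=
  cls φ ⟨(cx hC a a, cx hC a a * a), (rr_mul_eq φ (ll_cx_self hC a).ge).symm⟩

/-- The inverse `[a,b]⁻¹ = [b,a]` on `Q`. -/
noncomputable def qinv {S : Type*} [Mul S] {φ : S →ₙ* Bicyclic} (u : QT φ) :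
    QT φ :=
  cls φ ⟨((Quot.out u).1.2, (Quot.out u).1.1), (Quot.out u).2.symm⟩


/-! The `∼`-class `aθ` consists exactly of the pairs `(x, x * a)` with `l x = r a`: two such
pairs are related through the multipliers that (C) supplies for `x` and `y`, and conversely a
pair `∼`-related to `(x, x * a)` has the right `l` on its first entry, while (B)(ii) cancels the
common left multiplier from its second entry. Hence `θ` is well defined, and injective because
`x * a = x * b` with `l x = r a = r b` forces `a = b` by (B)(ii). The product in `Q` is computed on
arbitrary representatives `(x, x * a)`, `(y, y * b)`, and yields the class of `(X * x, Y * y * b)`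
with `X * x * a = Y * y`, again a pair `(z, z * (a * b))` with `l z = r (a * b)`. -/

section Mul

variable {S : Type*} [Mul S] {φ : S →ₙ* Bicyclic}

theorem ll_mul (φ : S →ₙ* Bicyclic) (x a : S) :
    ll φ (x * a) = ll φ a + (max (ll φ x) (rr φ a) - rr φ a) := by
  simp only [rr, ll, map_mul]; rfl

theorem ll_mul_eq {x a : S} (h : ll φ x = rr φ a) : ll φ (x * a) = ll φ a := by
  have := ll_mul φ x a; omega

theorem simP_symm {p q : S × S} (h : simP φ p q) : simP φ q p := by
  obtain ⟨x, y, h1, h2, h3, h4, h5⟩ := h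
  exact ⟨y, x, h1.symm, h2.symm, h4, h3, h5.symm⟩

def IsThetaRep (φ : S →ₙ* Bicyclic) (a : S) (p : S × S) : Prop :=
  ll φ p.1 = rr φ a ∧ p.2 = p.1 * a

theorem eq_of_isThetaRep (hBii : CondBii φ) {a b : S} {p : S × S}
    (ha : IsThetaRep φ a p) (hb : IsThetaRep φ b p) : a = b :=
  hBii a b p.1 ha.1.le hb.1.le (ha.2.symm.trans hb.2)

end Mul

section Semigroup

variable {S : Type*} [Semigroup S] {φ : S →ₙ* Bicyclic}

theorem cls_eq_of_isThetaRep (hC : CondC φ) {a : S} {p q : Sig φ}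
    (hp : IsThetaRep φ a p.1) (hq : IsThetaRep φ a q.1) : cls φ p = cls φ q := by
  obtain ⟨⟨x, xa⟩, _⟩ := p
  obtain ⟨⟨y, ya⟩, _⟩ := q
  obtain ⟨hx, (rfl : xa = x * a)⟩ := hp
  obtain ⟨hy, (rfl : ya = y * a)⟩ := hq
  dsimp only at hx hy
  obtain ⟨w, w', hw, hr, hlw, hlw'⟩ := hC x y
  refine Quot.sound ⟨w, w', hw, ?_, ?_, ?_, hr⟩
  · simp only [← mul_assoc, hw]
  · dsimp only; omega
  · dsimp only; omega

theorem theta_eq_cls (hC : CondC φ) {a : S} {p : Sig φ} (hp : IsThetaRep φ a p.1) :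
    theta hC a = cls φ p :=
  cls_eq_of_isThetaRep hC ⟨ll_cx_self hC a, rfl⟩ hp

theorem isThetaRep_of_simP (hBii : CondBii φ) {a : S} {p q : S × S}
    (hp : rr φ p.1 = rr φ p.2) (h : simP φ p q) (hq : IsThetaRep φ a q) :
    IsThetaRep φ a p := by
  obtain ⟨p₁, p₂⟩ := p
  obtain ⟨x, xa⟩ := q
  obtain ⟨hx, (rfl : xa = x * a)⟩ := hq
  obtain ⟨s, t, h₁, h₂, hs, ht, -⟩ := h
  dsimp only at hp h₁ h₂ hs ht ⊢
  have hp₁ : ll φ p₁ = rr φ a := by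
    rw [← ll_mul_eq hs, h₁, ll_mul_eq ht, hx]
  refine ⟨hp₁, hBii _ _ s (by dsimp only; omega) ?_ ?_⟩
  · rw [rr_mul_eq φ hp₁.ge]; omega
  · rw [h₂, ← mul_assoc, ← h₁, mul_assoc]

theorem isThetaRep_iff_of_eqvGen (hBii : CondBii φ) {a : S} {p q : Sig φ}
    (h : Relation.EqvGen (sim φ) p q) : IsThetaRep φ a p.1 ↔ IsThetaRep φ a q.1 := by
  induction h with
  | rel p q h =>
    exact ⟨fun hp => isThetaRep_of_simP hBii q.2 (simP_symm h) hp,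
      isThetaRep_of_simP hBii p.2 h⟩
  | refl => rfl
  | symm _ _ _ ih => exact ih.symm
  | trans _ _ _ _ _ ih₁ ih₂ => exact ih₁.trans ih₂

theorem isThetaRep_iff_of_cls_eq (hBii : CondBii φ) {a : S} {p q : Sig φ}
    (h : cls φ p = cls φ q) : IsThetaRep φ a p.1 ↔ IsThetaRep φ a q.1 :=
  isThetaRep_iff_of_eqvGen hBii (Quot.eqvGen_exact h)

theorem isThetaRep_out_theta (hBii : CondBii φ) (hC : CondC φ) (a : S) :
    IsThetaRep φ a (Quot.out (theta hC a)).1 :=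
  (isThetaRep_iff_of_cls_eq hBii (Quot.out_eq _)).mpr ⟨ll_cx_self hC a, rfl⟩

theorem isThetaRep_mul {a b x y X Y : S} (hx : ll φ x = rr φ a) (hy : ll φ y = rr φ b)
    (hXY : X * (x * a) = Y * y)
    (hX : ll φ X = rr φ (x * a) + (max (ll φ (x * a)) (ll φ y) - ll φ (x * a))) :
    IsThetaRep φ (a * b) (X * x, Y * (y * b)) := by
  refine ⟨?_, ?_⟩
  · have := ll_mul φ X x
    have := ll_mul_eq hx
    have := rr_mul φ a b
    have := rr_mul_eq φ hx.ge
    dsimp only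
    omega
  · dsimp only
    rw [← mul_assoc, ← hXY]
    simp only [mul_assoc]

theorem isThetaRep_pairMul (hC : CondC φ) {a b : S} {p q : Sig φ}
    (hp : IsThetaRep φ a p.1) (hq : IsThetaRep φ b q.1) :
    IsThetaRep φ (a * b) (pairMul hC p q).1 := by
  obtain ⟨⟨x, xa⟩, _⟩ := p
  obtain ⟨⟨y, yb⟩, _⟩ := q
  obtain ⟨hx, (rfl : xa = x * a)⟩ := hp
  obtain ⟨hy, (rfl : yb = y * b)⟩ := hq
  obtain ⟨hXY, -, hX, -⟩ := c_spec hC (x * a) y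
  exact isThetaRep_mul hx hy hXY hX

end Semigroup

theorem stmt12_general {S : Type*} [Semigroup S] (φ : S →ₙ* Bicyclic)
    (hBii : CondBii φ) (hC : CondC φ) :
    (∀ a : S, ∃ x : S, ll φ x = rr φ a) ∧
    (∀ (a x y : S) (hx : ll φ x = rr φ a) (hy : ll φ y = rr φ a),
      cls φ (mkSig φ x (x * a) (rr_mul_eq φ hx.ge).symm) =
        cls φ (mkSig φ y (y * a) (rr_mul_eq φ hy.ge).symm)) ∧
    Function.Injective (theta hC) ∧
    (∀ a b : S, theta hC (a * b) = qmul hC (theta hC a) (theta hC b)) := by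
  refine ⟨fun a => ⟨cx hC a a, ll_cx_self hC a⟩, fun a x y hx hy => ?_, fun a b h => ?_,
    fun a b => ?_⟩
  · exact cls_eq_of_isThetaRep hC ⟨hx, rfl⟩ ⟨hy, rfl⟩
  · have ha : IsThetaRep φ a (cx hC b b, cx hC b b * b) :=
      (isThetaRep_iff_of_cls_eq hBii h).mp ⟨ll_cx_self hC a, rfl⟩
    exact eq_of_isThetaRep hBii ha ⟨ll_cx_self hC b, rfl⟩
  · exact theta_eq_cls hC
      (isThetaRep_pairMul hC (isThetaRep_out_theta hBii hC a) (isThetaRep_out_theta hBii hC b))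

/-- The map `θ : S → Q`, `a θ = [x, x*a]` (any `x` with `l x = r a`), is a
well-defined injective semigroup homomorphism embedding `S` in `Q`. -/
theorem stmt12 {S : Type*} [Semigroup S] (φ : S →ₙ* Bicyclic)
    (hA : CondA φ) (hBi : CondBi φ) (hBii : CondBii φ) (hC : CondC φ) :
    (∀ a : S, ∃ x : S, ll φ x = rr φ a) ∧
    (∀ (a x y : S) (hx : ll φ x = rr φ a) (hy : ll φ y = rr φ a),
      cls φ (mkSig φ x (x * a) (rr_mul_eq φ hx.ge).symm) =
        cls φ (mkSig φ y (y * a) (rr_mul_eq φ hy.ge).symm)) ∧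
    Function.Injective (theta hC) ∧
    (∀ a b : S, theta hC (a * b) = qmul hC (theta hC a) (theta hC b)) :=
  stmt12_general φ hBii hC
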